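/- arXiv:1612.03297 — 2 statements merged into one kernel-verified Lean document; each statement's English description precedes it below -/
import Mathlib

section
/- With the pointwise warped-product curvature data of the setup, let P be the projective curvature tensor on V, P(X₁,X₂,X₃,X₄) := R(X₁,X₂,X₃,X₄) − (1/(n−2))[S(X₂,X₃)g(X₁,X₄) − S(X₁,X₃)g(X₂,X₄)], and let P·R be formed with the g-operator of P. If P·R = 0 on V, then either R̄ = 0 (the base is flat at the point) or S̃ = (κ̃/q) g̃ (the fiber is Einstein at the point). -/
/- Pointwise algebraic operations used for pseudosymmetry-type curvature conditions. -/
namespace WPS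

variable {V : Type} [AddCommGroup V] [Module ℝ V]

/-- The endomorphism `X ∧_A Y` given by `(X ∧_A Y) Z = A(Y,Z) X - A(X,Z) Y`. -/
def wedge (A : V → V → ℝ) (X Y Z : V) : V := A Y Z • X - A X Z • Y

/-- `(D · H)(X₁,X₂,X₃,X₄; X,Y)` for a (0,4)-tensor `H`, where `Dop X Y` is the
curvature operator `𝒟(X,Y)` of `D`. -/
def dot4 (Dop : V → V → V → V) (H : V → V → V → V → ℝ)
    (X1 X2 X3 X4 X Y : V) : ℝ :=
  -H (Dop X Y X1) X2 X3 X4 - H X1 (Dop X Y X2) X3 X4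
    - H X1 X2 (Dop X Y X3) X4 - H X1 X2 X3 (Dop X Y X4)

/-- `(D · H)(X₁,X₂; X,Y)` for a (0,2)-tensor `H`. -/
def dot2 (Dop : V → V → V → V) (H : V → V → ℝ) (X1 X2 X Y : V) : ℝ :=
  -H (Dop X Y X1) X2 - H X1 (Dop X Y X2)

/-- The Tachibana operator `Q(A,H)` for a (0,4)-tensor `H`. -/
def Q4 (A : V → V → ℝ) (H : V → V → V → V → ℝ) :
    V → V → V → V → V → V → ℝ := dot4 (wedge A) H

/-- The Tachibana operator `Q(A,H)` for a (0,2)-tensor `H`. -/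
def Q2 (A : V → V → ℝ) (H : V → V → ℝ) : V → V → V → V → ℝ := dot2 (wedge A) H

/-- Symmetric bilinear form (as a bare function). -/
def SymBilin (A : V → V → ℝ) : Prop :=
  (∀ x y, A x y = A y x) ∧ ∀ y, IsLinearMap ℝ fun x => A x y

/-- Nondegeneracy of a bilinear form. -/
def Nondeg (g : V → V → ℝ) : Prop := ∀ x, (∀ y, g x y = 0) → x = 0

/-- Algebraic curvature tensor: multilinear, with the antisymmetries, pair symmetry
and first Bianchi identity of a Riemann curvature tensor. -/
def Curv (R : V → V → V → V → ℝ) : Prop :=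
  (∀ y z w, IsLinearMap ℝ fun x => R x y z w) ∧
  (∀ x z w, IsLinearMap ℝ fun y => R x y z w) ∧
  (∀ x y w, IsLinearMap ℝ fun z => R x y z w) ∧
  (∀ x y z, IsLinearMap ℝ fun w => R x y z w) ∧
  (∀ x y z w, R x y z w = -R y x z w) ∧
  (∀ x y z w, R x y z w = -R x y w z) ∧
  (∀ x y z w, R x y z w = R z w x y) ∧
  ∀ x y z w, R x y z w + R y z x w + R z x y w = 0

/-- The Gaussian-type tensor `G(x,y,z,w) = g(x,w) g(y,z) - g(x,z) g(y,w)`. -/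
def Gten (g : V → V → ℝ) (x y z w : V) : ℝ := g x w * g y z - g x z * g y w

end WPS

theorem stmt17
    {Vb Vf : Type} [AddCommGroup Vb] [Module ℝ Vb] [FiniteDimensional ℝ Vb]
    [AddCommGroup Vf] [Module ℝ Vf] [FiniteDimensional ℝ Vf]
    (p q : ℕ) (hp : 1 ≤ p) (hq : 1 ≤ q) (hn : 3 ≤ p + q)
    (hdb : Module.finrank ℝ Vb = p) (hdf : Module.finrank ℝ Vf = q)
    (gb : Vb → Vb → ℝ) (hgb : WPS.SymBilin gb) (hgbn : WPS.Nondeg gb)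
    (gf : Vf → Vf → ℝ) (hgf : WPS.SymBilin gf) (hgfn : WPS.Nondeg gf)
    (f Δ : ℝ) (hf : 0 < f)
    (T : Vb → Vb → ℝ) (hT : WPS.SymBilin T)
    (Tsh : Vb →ₗ[ℝ] Vb) (hTsh : ∀ x y, gb (Tsh x) y = T x y)
    (Ω : ℝ) (hΩ : Ω = -f * (((q : ℝ) - 1) * Δ + LinearMap.trace ℝ Vb Tsh))
    (Rb : Vb → Vb → Vb → Vb → ℝ) (hRb : WPS.Curv Rb)
    (Rf : Vf → Vf → Vf → Vf → ℝ) (hRf : WPS.Curv Rf)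
    (Rbop : Vb → Vb → Vb → Vb) (hRbop : ∀ x y z w, gb (Rbop x y z) w = Rb x y z w)
    (Rfop : Vf → Vf → Vf → Vf) (hRfop : ∀ x y z w, gf (Rfop x y z) w = Rf x y z w)
    (Sb : Vb → Vb → ℝ)
    (hSb : ∀ y z, ∃ E : Vb →ₗ[ℝ] Vb, (∀ x w, gb (E x) w = Rb x y z w) ∧
      Sb y z = LinearMap.trace ℝ Vb E)
    (Sf : Vf → Vf → ℝ)
    (hSf : ∀ y z, ∃ E : Vf →ₗ[ℝ] Vf, (∀ x w, gf (E x) w = Rf x y z w) ∧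
      Sf y z = LinearMap.trace ℝ Vf E)
    (κf : ℝ)
    (hκf : ∃ E : Vf →ₗ[ℝ] Vf, (∀ x y, gf (E x) y = Sf x y) ∧
      κf = LinearMap.trace ℝ Vf E)
    (gV : Vb × Vf → Vb × Vf → ℝ)
    (hgV : ∀ X Y, gV X Y = gb X.1 Y.1 + f * gf X.2 Y.2)
    (RV : Vb × Vf → Vb × Vf → Vb × Vf → Vb × Vf → ℝ)
    (hRV : ∀ X Y Z W, RV X Y Z W = Rb X.1 Y.1 Z.1 W.1
      + f * (T X.1 Z.1 * gf Y.2 W.2 + T Y.1 W.1 * gf X.2 Z.2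
        - T X.1 W.1 * gf Y.2 Z.2 - T Y.1 Z.1 * gf X.2 W.2)
      + f * Rf X.2 Y.2 Z.2 W.2 - f ^ 2 * Δ * WPS.Gten gf X.2 Y.2 Z.2 W.2)
    (SV : Vb × Vf → Vb × Vf → ℝ)
    (hSV : ∀ X Y, SV X Y = (Sb X.1 Y.1 - (q : ℝ) * T X.1 Y.1)
      + (Sf X.2 Y.2 + Ω * gf X.2 Y.2))
    (Rop : Vb × Vf → Vb × Vf → Vb × Vf → Vb × Vf)
    (hRop : ∀ X Y Z W, gV (Rop X Y Z) W = RV X Y Z W)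
    (PV : Vb × Vf → Vb × Vf → Vb × Vf → Vb × Vf → ℝ)
    (hPV : ∀ X1 X2 X3 X4 : Vb × Vf, PV X1 X2 X3 X4 = RV X1 X2 X3 X4
      - 1 / (((p + q : ℕ) : ℝ) - 2) * (SV X2 X3 * gV X1 X4 - SV X1 X3 * gV X2 X4))
    (Pop : Vb × Vf → Vb × Vf → Vb × Vf → Vb × Vf)
    (hPop : ∀ X Y Z W, gV (Pop X Y Z) W = PV X Y Z W)
    (hmain : ∀ X1 X2 X3 X4 X Y : Vb × Vf, WPS.dot4 Pop RV X1 X2 X3 X4 X Y = 0) :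
    (∀ x y z w : Vb, Rb x y z w = 0) ∨ (∀ a b : Vf, Sf a b = (κf / (q : ℝ)) * gf a b) := by
  classical
  by_cases hE : ∀ a b : Vf, Sf a b = (κf / (q : ℝ)) * gf a b
  · exact Or.inr hE
  · refine Or.inl ?_
    push_neg at hE
    obtain ⟨a0, b0, ha0⟩ := hE
    intro x y z w
    by_contra hR0
    set c : ℝ := 1 / (((p + q : ℕ) : ℝ) - 2) with hc_def
    have hn3 : (3 : ℝ) ≤ ((p + q : ℕ) : ℝ) := by exact_mod_cast hn
    have hc0 : c ≠ 0 := by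
      rw [hc_def]; exact one_div_ne_zero (by linarith)
    obtain ⟨gbsymm, gblin⟩ := hgb
    obtain ⟨gfsymm, gflin⟩ := hgf
    obtain ⟨Tsymm, Tlin⟩ := hT
    have gb0l : ∀ v, gb 0 v = 0 := fun v => (gblin v).map_zero
    have gb0r : ∀ v, gb v 0 = 0 := fun v => by rw [gbsymm]; exact gb0l v
    have gf0l : ∀ v, gf 0 v = 0 := fun v => (gflin v).map_zero
    have gf0r : ∀ v, gf v 0 = 0 := fun v => by rw [gfsymm]; exact gf0l v
    have T0l : ∀ v, T 0 v = 0 := fun v => (Tlin v).map_zero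
    have T0r : ∀ v, T v 0 = 0 := fun v => by rw [Tsymm]; exact T0l v
    have gbsmul : ∀ (r : ℝ) u v, gb (r • u) v = r * gb u v := fun r u v => by
      rw [(gblin v).map_smul, smul_eq_mul]
    have gfsmul : ∀ (r : ℝ) u v, gf (r • u) v = r * gf u v := fun r u v => by
      rw [(gflin v).map_smul, smul_eq_mul]
    have gbsub : ∀ u v w', gb (u - v) w' = gb u w' - gb v w' := fun u v w' =>
      (gblin w').map_sub u v
    have gfsub : ∀ u v w', gf (u - v) w' = gf u w' - gf v w' := fun u v w' =>
      (gflin w').map_sub u v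
    obtain ⟨Rb1, Rb2, Rb3, Rb4, -, -, -, -⟩ := hRb
    obtain ⟨Rf1, Rf2, Rf3, Rf4, -, -, -, -⟩ := hRf
    have Rb01 : ∀ b c' d', Rb 0 b c' d' = 0 := fun b c' d' => (Rb1 b c' d').map_zero
    have Rb02 : ∀ a c' d', Rb a 0 c' d' = 0 := fun a c' d' => (Rb2 a c' d').map_zero
    have Rb03 : ∀ a b d', Rb a b 0 d' = 0 := fun a b d' => (Rb3 a b d').map_zero
    have Rb04 : ∀ a b c', Rb a b c' 0 = 0 := fun a b c' => (Rb4 a b c').map_zero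
    have Rf01 : ∀ b c' d', Rf 0 b c' d' = 0 := fun b c' d' => (Rf1 b c' d').map_zero
    have Rf02 : ∀ a c' d', Rf a 0 c' d' = 0 := fun a c' d' => (Rf2 a c' d').map_zero
    have Rf03 : ∀ a b d', Rf a b 0 d' = 0 := fun a b d' => (Rf3 a b d').map_zero
    have Rb4sub : ∀ a b c' u v, Rb a b c' (u - v) = Rb a b c' u - Rb a b c' v :=
      fun a b c' u v => (Rb4 a b c').map_sub u v
    have Rb4smul : ∀ a b c' (r : ℝ) u, Rb a b c' (r • u) = r * Rb a b c' u :=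
      fun a b c' r u => by rw [(Rb4 a b c').map_smul, smul_eq_mul]
    -- zero lemmas for the Ricci forms
    have Sb0r : ∀ u, Sb u 0 = 0 := by
      intro u
      obtain ⟨E, hE1, hE2⟩ := hSb u 0
      have hE0 : E = 0 := by
        apply LinearMap.ext; intro v
        refine hgbn _ fun w' => ?_
        rw [hE1, Rb03]
      rw [hE2, hE0, map_zero]
    have Sb0l : ∀ u, Sb 0 u = 0 := by
      intro u
      obtain ⟨E, hE1, hE2⟩ := hSb 0 u
      have hE0 : E = 0 := by
        apply LinearMap.ext; intro v
        refine hgbn _ fun w' => ?_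
        rw [hE1, Rb02]
      rw [hE2, hE0, map_zero]
    have Sf0r : ∀ u, Sf u 0 = 0 := by
      intro u
      obtain ⟨E, hE1, hE2⟩ := hSf u 0
      have hE0 : E = 0 := by
        apply LinearMap.ext; intro v
        refine hgfn _ fun w' => ?_
        rw [hE1, Rf03]
      rw [hE2, hE0, map_zero]
    have Sf0l : ∀ u, Sf 0 u = 0 := by
      intro u
      obtain ⟨E, hE1, hE2⟩ := hSf 0 u
      have hE0 : E = 0 := by
        apply LinearMap.ext; intro v
        refine hgfn _ fun w' => ?_
        rw [hE1, Rf02]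
      rw [hE2, hE0, map_zero]
    -- nondegeneracy of gV
    have gVn : ∀ v : Vb × Vf, (∀ W, gV v W = 0) → v = 0 := by
      intro v hv
      have h1 : v.1 = 0 := by
        refine hgbn _ fun u => ?_
        have h := hv (u, 0)
        rw [hgV] at h
        simp only [gf0r, mul_zero, add_zero] at h
        exact h
      have h2 : v.2 = 0 := by
        refine hgfn _ fun u => ?_
        have h := hv (0, u)
        rw [hgV] at h
        simp only [gb0r, zero_add] at h
        rcases mul_eq_zero.mp h with h' | h'
        · exact absurd h' (ne_of_gt hf)
        · exact h'
      rw [Prod.ext_iff]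
      exact ⟨by simpa using h1, by simpa using h2⟩
    -- determination of Pop
    have PopEq : ∀ X Y Z vv, (∀ W, gV vv W = PV X Y Z W) → Pop X Y Z = vv := by
      intro X Y Z vv h
      have h0 : ∀ W, gV (Pop X Y Z - vv) W = 0 := by
        intro W
        have e1 := hPop X Y Z W
        have e2 := h W
        rw [hgV] at e1 e2 ⊢
        simp only [Prod.fst_sub, Prod.snd_sub, gbsub, gfsub]
        linear_combination e1 - e2
      exact sub_eq_zero.mp (gVn _ h0)
    -- explicit values of Pop
    have PopB : ∀ (u v : Vb) (d : Vf),
        Pop (u, (0 : Vf)) ((0 : Vb), d) (v, (0 : Vf)) =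
          ((0 : Vb), (T u v + c * (Sb u v - (q : ℝ) * T u v)) • d) := by
      intro u v d
      apply PopEq
      intro W
      rw [hgV, hPV, hRV, hSV, hSV, hgV, hgV]
      simp only [WPS.Gten, gb0l, gb0r, gf0l, gf0r, T0l, T0r, Rb02, Rf01,
        Sb0l, Sf0r, Sf0l, gfsmul, mul_zero, zero_mul, add_zero, zero_add,
        sub_zero, zero_sub, neg_zero]
      ring
    have PopF : ∀ (u : Vb) (d a : Vf),
        Pop (u, (0 : Vf)) ((0 : Vb), d) ((0 : Vb), a) =
          ((-(f * gf d a)) • Tsh u - (c * (Sf d a + Ω * gf d a)) • u, (0 : Vf)) := by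
      intro u d a
      apply PopEq
      intro W
      rw [hgV, hPV, hRV, hSV, hSV, hgV, hgV]
      simp only [WPS.Gten, gbsub, gbsmul, hTsh, gb0l, gb0r, gf0l, gf0r, T0l, T0r,
        Rb02, Rf01, Sb0l, Sb0r, Sf0l, mul_zero, zero_mul, add_zero, zero_add,
        sub_zero, zero_sub, neg_zero]
      ring
    -- the key scalar identity extracted from hmain
    have key : ∀ d a : Vf,
        gf d a * (f * ((T w x + c * (Sb w x - (q : ℝ) * T w x)) * T y z
            - (T w y + c * (Sb w y - (q : ℝ) * T w y)) * T x z
            + Rb x y z (Tsh w))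
          + c * Ω * Rb x y z w)
        + Sf d a * (c * Rb x y z w) = 0 := by
      intro d a
      have hm := hmain (x, 0) (y, 0) (z, 0) ((0 : Vb), a) (w, 0) ((0 : Vb), d)
      rw [WPS.dot4, PopB w x d, PopB w y d, PopB w z d, PopF w d a,
        hRV, hRV, hRV, hRV] at hm
      simp only [WPS.Gten, Rb4sub, Rb4smul, Rb01, Rb02, Rb03, Rb04,
        Rf01, Rf02, Rf03, T0l, T0r, gf0l, gf0r, gfsmul,
        mul_zero, zero_mul, add_zero, zero_add, sub_zero, zero_sub, neg_zero,
        neg_neg, mul_neg, neg_mul] at hm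
      linear_combination hm
    -- conclude that Sf is proportional to gf, contradiction
    have hB : c * Rb x y z w ≠ 0 := mul_ne_zero hc0 hR0
    set A : ℝ := f * ((T w x + c * (Sb w x - (q : ℝ) * T w x)) * T y z
        - (T w y + c * (Sb w y - (q : ℝ) * T w y)) * T x z
        + Rb x y z (Tsh w))
      + c * Ω * Rb x y z w with hA_def
    set lam : ℝ := -A / (c * Rb x y z w) with hlam_def
    have hSfall : ∀ d a : Vf, Sf d a = lam * gf d a := by
      intro d a
      rw [hlam_def, div_mul_eq_mul_div, eq_div_iff hB]
      linear_combination key d a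
    obtain ⟨E, hE1, hE2⟩ := hκf
    have hEv : ∀ v, E v = lam • v := by
      intro v
      have h0 : E v - lam • v = 0 := by
        refine hgfn _ fun u => ?_
        rw [gfsub, gfsmul, hE1, hSfall]
        ring
      exact sub_eq_zero.mp h0
    have hEeq : E = lam • (LinearMap.id : Vf →ₗ[ℝ] Vf) := by
      apply LinearMap.ext; intro v
      rw [hEv]
      simp
    have htr : κf = lam * (q : ℝ) := by
      rw [hE2, hEeq, map_smul, LinearMap.trace_id, hdf, smul_eq_mul]
    have hq : (q : ℝ) ≠ 0 := Nat.cast_ne_zero.mpr (by omega)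
    apply ha0
    rw [hSfall a0 b0, htr]
    field_simp
end

section
/- With the pointwise warped-product curvature data of the setup, let P be the projective curvature tensor on V, P(X₁,X₂,X₃,X₄) := R(X₁,X₂,X₃,X₄) − (1/(n−2))[S(X₂,X₃)g(X₁,X₄) − S(X₁,X₃)g(X₂,X₄)], and let P·R be formed with the g-operator of P. If P·R = L₁ Q(g,R) on V for some real number L₁, then either R̄ = 0 (the base is flat at the point) or S̃ = (κ̃/q) g̃ (the fiber is Einstein at the point). -/
/-!
Evaluate `P·R = L₁ Q(g,R)` at base vectors `y, z, w` (slots 2–4), `x` (slot `X`) and fiber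
vectors `b` (slot 1), `a` (slot `Y`). For any tensor `D` with `g`-operator `𝒟`, the value of
`D·R` at these arguments only involves `D` at mixed base/fiber arguments, and this applies both
to `P` and to `Gten g`, whose operator is `X ∧_g Y`. Every resulting term is a multiple of
`g̃(a,b)`, except for the Ricci part of `P`, which contributes `(1/(n-2)) S̃(a,b) R̄(x,y,z,w)`.
Hence `S̃(a,b) g̃(a',b') R̄ = S̃(a',b') g̃(a,b) R̄`; if `R̄ ≠ 0` somewhere, `S̃ = λ g̃`, and
taking the `g̃`-trace gives `λ = κ̃/q`.
-/

namespace WPS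

def projCurv {V : Type} (c : ℝ) (R : V → V → V → V → ℝ) (S g : V → V → ℝ)
    (X1 X2 X3 X4 : V) : ℝ :=
  R X1 X2 X3 X4 - c * (S X2 X3 * g X1 X4 - S X1 X3 * g X2 X4)

section General

variable {V : Type} [AddCommGroup V]

theorem Nondeg.exists_eq_mul_of_cross_mul_eq [Nontrivial V] {g S : V → V → ℝ} (hgn : Nondeg g)
    (h : ∀ a b a' b', S a b * g a' b' = S a' b' * g a b) : ∃ μ, ∀ a b, S a b = μ * g a b := by
  obtain ⟨a₀, ha₀⟩ := exists_ne (0 : V)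
  obtain ⟨b₀, hb₀⟩ : ∃ b₀, g a₀ b₀ ≠ 0 := by
    by_contra! h₀
    exact ha₀ (hgn a₀ h₀)
  refine ⟨S a₀ b₀ / g a₀ b₀, fun a b => ?_⟩
  rw [div_mul_eq_mul_div, eq_div_iff hb₀]
  exact h a b a₀ b₀

variable [Module ℝ V]

theorem SymBilin.map_zero_left {A : V → V → ℝ} (hA : SymBilin A) (y : V) : A 0 y = 0 :=
  (hA.2 y).map_zero

theorem SymBilin.map_zero_right {A : V → V → ℝ} (hA : SymBilin A) (x : V) : A x 0 = 0 := by
  rw [hA.1]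
  exact hA.map_zero_left x

theorem Curv.map_zero_fst {R : V → V → V → V → ℝ} (hR : Curv R) (y z w : V) : R 0 y z w = 0 :=
  (hR.1 y z w).map_zero

theorem Curv.map_zero_snd {R : V → V → V → V → ℝ} (hR : Curv R) (x z w : V) : R x 0 z w = 0 :=
  (hR.2.1 x z w).map_zero

theorem Curv.map_zero_thd {R : V → V → V → V → ℝ} (hR : Curv R) (x y w : V) : R x y 0 w = 0 :=
  (hR.2.2.1 x y w).map_zero

theorem Curv.apply_op_eq_neg {R : V → V → V → V → ℝ} (hR : Curv R) {g : V → V → ℝ}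
    (hg : ∀ x y, g x y = g y x) {Rop : V → V → V → V}
    (hRop : ∀ x y z w, g (Rop x y z) w = R x y z w) (u y z w : V) :
    g u (Rop z w y) = -R u y z w := by
  rw [hg, hRop, hR.2.2.2.2.2.2.1 z w y u, hR.2.2.2.2.1 y u z w]

theorem apply_wedge_left {g : V → V → ℝ} (hg : ∀ y, IsLinearMap ℝ fun x => g x y)
    (X Y Z W : V) : g (wedge g X Y Z) W = Gten g X Y Z W := by
  have hsub := (hg W).map_sub (g Y Z • X) (g X Z • Y)
  have hX := (hg W).map_smul (g Y Z) X
  have hY := (hg W).map_smul (g X Z) Y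
  simp only [smul_eq_mul] at hsub hX hY
  rw [wedge, Gten, hsub, hX, hY]
  ring

theorem Nondeg.linearMap_eq_smul_id {g : V → V → ℝ} (hg : ∀ y, IsLinearMap ℝ fun x => g x y)
    (hgn : Nondeg g) {E : V →ₗ[ℝ] V} {μ : ℝ} (hE : ∀ x y, g (E x) y = μ * g x y) :
    E = μ • LinearMap.id := by
  ext x
  refine sub_eq_zero.mp (hgn _ fun y => ?_)
  have hsub := (hg y).map_sub (E x) (μ • x)
  have hsmul := (hg y).map_smul μ x
  simp only [smul_eq_mul] at hsub hsmul
  rw [LinearMap.smul_apply, LinearMap.id_apply, hsub, hsmul, hE, sub_self]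

theorem Curv.ricci_map_zero_left {R : V → V → V → V → ℝ} (hR : Curv R) {g : V → V → ℝ}
    (hg : ∀ y, IsLinearMap ℝ fun x => g x y) (hgn : Nondeg g) {S : V → V → ℝ}
    (hS : ∀ y z, ∃ E : V →ₗ[ℝ] V, (∀ x w, g (E x) w = R x y z w) ∧ S y z = LinearMap.trace ℝ V E)
    (z : V) : S 0 z = 0 := by
  obtain ⟨E, hE, hSE⟩ := hS 0 z
  have hE₀ : E = (0 : ℝ) • LinearMap.id :=
    hgn.linearMap_eq_smul_id hg fun x w => by rw [hE, hR.map_zero_snd, zero_mul]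
  rw [hSE, hE₀, zero_smul, map_zero]

theorem eq_trace_div_finrank_mul [FiniteDimensional ℝ V] {g S : V → V → ℝ}
    (hg : ∀ y, IsLinearMap ℝ fun x => g x y) (hgn : Nondeg g) (hV : Module.finrank ℝ V ≠ 0)
    {μ : ℝ} (hS : ∀ a b, S a b = μ * g a b) {κ : ℝ}
    (hκ : ∃ E : V →ₗ[ℝ] V, (∀ x y, g (E x) y = S x y) ∧ κ = LinearMap.trace ℝ V E) (a b : V) :
    S a b = κ / Module.finrank ℝ V * g a b := by
  obtain ⟨E, hE, rfl⟩ := hκ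
  have hEμ : E = μ • LinearMap.id :=
    hgn.linearMap_eq_smul_id hg fun x y => (hE x y).trans (hS x y)
  rw [hEμ, map_smul, LinearMap.trace_id, smul_eq_mul, mul_div_assoc,
    div_self (Nat.cast_ne_zero.mpr hV), mul_one, hS]

end General

section WarpedProduct

variable {Vb Vf : Type}

def warpedMetric (gb : Vb → Vb → ℝ) (gf : Vf → Vf → ℝ) (f : ℝ) (X Y : Vb × Vf) : ℝ :=
  gb X.1 Y.1 + f * gf X.2 Y.2

def warpedCurv (gf : Vf → Vf → ℝ) (f Δ : ℝ) (T : Vb → Vb → ℝ) (Rb : Vb → Vb → Vb → Vb → ℝ)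
    (Rf : Vf → Vf → Vf → Vf → ℝ) (X Y Z W : Vb × Vf) : ℝ :=
  Rb X.1 Y.1 Z.1 W.1
    + f * (T X.1 Z.1 * gf Y.2 W.2 + T Y.1 W.1 * gf X.2 Z.2
      - T X.1 W.1 * gf Y.2 Z.2 - T Y.1 Z.1 * gf X.2 W.2)
    + f * Rf X.2 Y.2 Z.2 W.2 - f ^ 2 * Δ * Gten gf X.2 Y.2 Z.2 W.2

variable {gb : Vb → Vb → ℝ} {gf : Vf → Vf → ℝ} {f Δ : ℝ} {T : Vb → Vb → ℝ}
  {Rb : Vb → Vb → Vb → Vb → ℝ} {Rf : Vf → Vf → Vf → Vf → ℝ}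

theorem isLinearMap_warpedMetric_left [AddCommGroup Vb] [Module ℝ Vb] [AddCommGroup Vf]
    [Module ℝ Vf] (hgb : SymBilin gb) (hgf : SymBilin gf) (Y : Vb × Vf) :
    IsLinearMap ℝ fun X => warpedMetric gb gf f X Y := by
  constructor
  · intro X X'
    simp only [warpedMetric, Prod.fst_add, Prod.snd_add, (hgb.2 Y.1).map_add,
      (hgf.2 Y.2).map_add]
    ring
  · intro c X
    simp only [warpedMetric, Prod.smul_fst, Prod.smul_snd, (hgb.2 Y.1).map_smul,
      (hgf.2 Y.2).map_smul, smul_eq_mul]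
    ring

theorem warpedMetric_base [AddCommGroup Vf] [Module ℝ Vf] (hgf : SymBilin gf)
    (X : Vb × Vf) (v : Vb) : warpedMetric gb gf f X (v, 0) = gb X.1 v := by
  rw [warpedMetric, hgf.map_zero_right, mul_zero, add_zero]

theorem warpedMetric_fiber [AddCommGroup Vb] [Module ℝ Vb] (hgb : SymBilin gb)
    (X : Vb × Vf) (b : Vf) : warpedMetric gb gf f X (0, b) = f * gf X.2 b := by
  rw [warpedMetric, hgb.map_zero_right, zero_add]

theorem warpedCurv_base_base [AddCommGroup Vf] [Module ℝ Vf] (hgf : SymBilin gf)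
    (hRf : Curv Rf) (X Y : Vb × Vf) (z w : Vb) :
    warpedCurv gf f Δ T Rb Rf X Y (z, 0) (w, 0) = Rb X.1 Y.1 z w := by
  simp only [warpedCurv, Gten, hgf.map_zero_right, hRf.map_zero_thd]
  ring

theorem warpedCurv_base_fiber [AddCommGroup Vb] [Module ℝ Vb] [AddCommGroup Vf] [Module ℝ Vf]
    (hgf : SymBilin gf) (hRb : Curv Rb) (hRf : Curv Rf) (x : Vb) (a : Vf) (Z W : Vb × Vf) :
    warpedCurv gf f Δ T Rb Rf (x, 0) (0, a) Z W
      = f * (T x Z.1 * gf a W.2 - T x W.1 * gf a Z.2) := by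
  simp only [warpedCurv, Gten, hgf.map_zero_left, hRb.map_zero_snd, hRf.map_zero_fst]
  ring

theorem warpedCurv_fiber_base [AddCommGroup Vb] [Module ℝ Vb] [AddCommGroup Vf] [Module ℝ Vf]
    (hgf : SymBilin gf) (hRb : Curv Rb) (hRf : Curv Rf) (b : Vf) (y : Vb) (Z W : Vb × Vf) :
    warpedCurv gf f Δ T Rb Rf (0, b) (y, 0) Z W
      = f * (T y W.1 * gf b Z.2 - T y Z.1 * gf b W.2) := by
  simp only [warpedCurv, Gten, hgf.map_zero_left, hRb.map_zero_fst, hRf.map_zero_snd]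
  ring

theorem dot4_warpedCurv_fiber_base_base_base [AddCommGroup Vb] [Module ℝ Vb] [AddCommGroup Vf]
    [Module ℝ Vf] (hgb : SymBilin gb) (hgf : SymBilin gf) (hRb : Curv Rb) (hRf : Curv Rf)
    {Rbop : Vb → Vb → Vb → Vb} (hRbop : ∀ x y z w, gb (Rbop x y z) w = Rb x y z w)
    {D : Vb × Vf → Vb × Vf → Vb × Vf → Vb × Vf → ℝ}
    {Dop : Vb × Vf → Vb × Vf → Vb × Vf → Vb × Vf}
    (hDop : ∀ X Y Z W, warpedMetric gb gf f (Dop X Y Z) W = D X Y Z W)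
    (X Y : Vb × Vf) (b : Vf) (y z w : Vb) :
    dot4 Dop (warpedCurv gf f Δ T Rb Rf) (0, b) (y, 0) (z, 0) (w, 0) X Y
      = D X Y (0, b) (Rbop z w y, 0) - T y w * D X Y (z, 0) (0, b)
        + T y z * D X Y (w, 0) (0, b) := by
  have hbase : Rb (Dop X Y (0, b)).1 y z w = -D X Y (0, b) (Rbop z w y, 0) := by
    rw [← hDop, warpedMetric_base hgf, hRb.apply_op_eq_neg hgb.1 hRbop, neg_neg]
  have hfiber : ∀ U, f * gf b (Dop X Y U).2 = D X Y U (0, b) := fun U => by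
    rw [← hDop, warpedMetric_fiber hgb, hgf.1]
  simp only [dot4, warpedCurv_base_base hgf hRf, warpedCurv_fiber_base hgf hRb hRf,
    hRb.map_zero_fst, hgf.map_zero_right, hbase, ← hfiber]
  ring

theorem fiber_ricci_cross_mul_eq [AddCommGroup Vb] [Module ℝ Vb] [AddCommGroup Vf]
    [Module ℝ Vf] (hgb : SymBilin gb) (hgf : SymBilin gf) (hRb : Curv Rb) (hRf : Curv Rf)
    {Rbop : Vb → Vb → Vb → Vb} (hRbop : ∀ x y z w, gb (Rbop x y z) w = Rb x y z w)
    {S : Vb × Vf → Vb × Vf → ℝ} {Sf : Vf → Vf → ℝ} {Ω : ℝ}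
    (hS : ∀ a b, S (0, a) (0, b) = Sf a b + Ω * gf a b) {c L : ℝ} (hc : c ≠ 0)
    {Pop : Vb × Vf → Vb × Vf → Vb × Vf → Vb × Vf}
    (hPop : ∀ X Y Z W, warpedMetric gb gf f (Pop X Y Z) W
      = projCurv c (warpedCurv gf f Δ T Rb Rf) S (warpedMetric gb gf f) X Y Z W)
    (hPR : ∀ X1 X2 X3 X4 X Y, dot4 Pop (warpedCurv gf f Δ T Rb Rf) X1 X2 X3 X4 X Y
      = L * Q4 (warpedMetric gb gf f) (warpedCurv gf f Δ T Rb Rf) X1 X2 X3 X4 X Y)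
    (x y z w : Vb) (a b a' b' : Vf) :
    Sf a b * gf a' b' * Rb x y z w = Sf a' b' * gf a b * Rb x y z w := by
  have hwedge := apply_wedge_left (isLinearMap_warpedMetric_left (f := f) hgb hgf)
  have H := hPR (0, b) (y, 0) (z, 0) (w, 0) (x, 0) (0, a)
  have H' := hPR (0, b') (y, 0) (z, 0) (w, 0) (x, 0) (0, a')
  rw [Q4, dot4_warpedCurv_fiber_base_base_base hgb hgf hRb hRf hRbop hPop,
    dot4_warpedCurv_fiber_base_base_base hgb hgf hRb hRf hRbop hwedge] at H H'
  simp only [projCurv, Gten, warpedCurv_base_fiber hgf hRb hRf, warpedMetric_base hgf,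
    warpedMetric_fiber hgb, hS, hgb.map_zero_left, hgf.map_zero_left, hgf.map_zero_right,
    hRb.apply_op_eq_neg hgb.1 hRbop] at H H'
  apply mul_left_cancel₀ hc
  linear_combination gf a' b' * H - gf a b * H'

end WarpedProduct

end WPS

theorem stmt19_general
    {Vb Vf : Type} [AddCommGroup Vb] [Module ℝ Vb]
    [AddCommGroup Vf] [Module ℝ Vf] [FiniteDimensional ℝ Vf]
    (p q : ℕ) (hq : 1 ≤ q) (hn : 3 ≤ p + q)
    (hdf : Module.finrank ℝ Vf = q)
    (gb : Vb → Vb → ℝ) (hgb : WPS.SymBilin gb) (hgbn : WPS.Nondeg gb)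
    (gf : Vf → Vf → ℝ) (hgf : WPS.SymBilin gf) (hgfn : WPS.Nondeg gf)
    (f Δ : ℝ)
    (T : Vb → Vb → ℝ) (hT : WPS.SymBilin T)
    (Ω : ℝ)
    (Rb : Vb → Vb → Vb → Vb → ℝ) (hRb : WPS.Curv Rb)
    (Rf : Vf → Vf → Vf → Vf → ℝ) (hRf : WPS.Curv Rf)
    (Rbop : Vb → Vb → Vb → Vb) (hRbop : ∀ x y z w, gb (Rbop x y z) w = Rb x y z w)
    (Sb : Vb → Vb → ℝ)
    (hSb : ∀ y z, ∃ E : Vb →ₗ[ℝ] Vb, (∀ x w, gb (E x) w = Rb x y z w) ∧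
      Sb y z = LinearMap.trace ℝ Vb E)
    (Sf : Vf → Vf → ℝ)
    (κf : ℝ)
    (hκf : ∃ E : Vf →ₗ[ℝ] Vf, (∀ x y, gf (E x) y = Sf x y) ∧
      κf = LinearMap.trace ℝ Vf E)
    (gV : Vb × Vf → Vb × Vf → ℝ)
    (hgV : ∀ X Y, gV X Y = gb X.1 Y.1 + f * gf X.2 Y.2)
    (RV : Vb × Vf → Vb × Vf → Vb × Vf → Vb × Vf → ℝ)
    (hRV : ∀ X Y Z W, RV X Y Z W = Rb X.1 Y.1 Z.1 W.1
      + f * (T X.1 Z.1 * gf Y.2 W.2 + T Y.1 W.1 * gf X.2 Z.2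
        - T X.1 W.1 * gf Y.2 Z.2 - T Y.1 Z.1 * gf X.2 W.2)
      + f * Rf X.2 Y.2 Z.2 W.2 - f ^ 2 * Δ * WPS.Gten gf X.2 Y.2 Z.2 W.2)
    (SV : Vb × Vf → Vb × Vf → ℝ)
    (hSV : ∀ X Y, SV X Y = (Sb X.1 Y.1 - (q : ℝ) * T X.1 Y.1)
      + (Sf X.2 Y.2 + Ω * gf X.2 Y.2))
    (PV : Vb × Vf → Vb × Vf → Vb × Vf → Vb × Vf → ℝ)
    (hPV : ∀ X1 X2 X3 X4 : Vb × Vf, PV X1 X2 X3 X4 = RV X1 X2 X3 X4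
      - 1 / (((p + q : ℕ) : ℝ) - 2) * (SV X2 X3 * gV X1 X4 - SV X1 X3 * gV X2 X4))
    (Pop : Vb × Vf → Vb × Vf → Vb × Vf → Vb × Vf)
    (hPop : ∀ X Y Z W, gV (Pop X Y Z) W = PV X Y Z W)
    (L1 : ℝ)
    (hmain : ∀ X1 X2 X3 X4 X Y : Vb × Vf, WPS.dot4 Pop RV X1 X2 X3 X4 X Y
      = L1 * WPS.Q4 gV RV X1 X2 X3 X4 X Y) :
    (∀ x y z w : Vb, Rb x y z w = 0) ∨ (∀ a b : Vf, Sf a b = (κf / (q : ℝ)) * gf a b) := by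
  by_cases hflat : ∀ x y z w : Vb, Rb x y z w = 0
  · exact Or.inl hflat
  right
  push Not at hflat
  obtain ⟨x, y, z, w, hRb₀⟩ := hflat
  obtain rfl : gV = WPS.warpedMetric gb gf f := funext₂ hgV
  obtain rfl : RV = WPS.warpedCurv gf f Δ T Rb Rf := by
    funext X Y Z W
    exact hRV X Y Z W
  obtain rfl : PV = WPS.projCurv (1 / (((p + q : ℕ) : ℝ) - 2)) (WPS.warpedCurv gf f Δ T Rb Rf)
      SV (WPS.warpedMetric gb gf f) := by
    funext X1 X2 X3 X4
    exact hPV X1 X2 X3 X4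
  have hSVf : ∀ a b, SV (0, a) (0, b) = Sf a b + Ω * gf a b := fun a b => by
    rw [hSV, hRb.ricci_map_zero_left hgb.2 hgbn hSb, hT.map_zero_left, mul_zero, sub_zero,
      zero_add]
  have hc : 1 / (((p + q : ℕ) : ℝ) - 2) ≠ 0 := by
    have : (3 : ℝ) ≤ ((p + q : ℕ) : ℝ) := by exact_mod_cast hn
    exact one_div_ne_zero (by linarith)
  have : Nontrivial Vf := Module.finrank_pos_iff (R := ℝ) |>.mp (by omega)
  obtain ⟨μ, hμ⟩ := hgfn.exists_eq_mul_of_cross_mul_eq fun a b a' b' => mul_right_cancel₀ hRb₀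
    (WPS.fiber_ricci_cross_mul_eq hgb hgf hRb hRf hRbop hSVf hc hPop hmain x y z w a b a' b')
  simpa only [hdf] using WPS.eq_trace_div_finrank_mul hgf.2 hgfn (by omega) hμ hκf

theorem stmt19
    {Vb Vf : Type} [AddCommGroup Vb] [Module ℝ Vb] [FiniteDimensional ℝ Vb]
    [AddCommGroup Vf] [Module ℝ Vf] [FiniteDimensional ℝ Vf]
    (p q : ℕ) (hp : 1 ≤ p) (hq : 1 ≤ q) (hn : 3 ≤ p + q)
    (hdb : Module.finrank ℝ Vb = p) (hdf : Module.finrank ℝ Vf = q)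
    (gb : Vb → Vb → ℝ) (hgb : WPS.SymBilin gb) (hgbn : WPS.Nondeg gb)
    (gf : Vf → Vf → ℝ) (hgf : WPS.SymBilin gf) (hgfn : WPS.Nondeg gf)
    (f Δ : ℝ) (hf : 0 < f)
    (T : Vb → Vb → ℝ) (hT : WPS.SymBilin T)
    (Tsh : Vb →ₗ[ℝ] Vb) (hTsh : ∀ x y, gb (Tsh x) y = T x y)
    (Ω : ℝ) (hΩ : Ω = -f * (((q : ℝ) - 1) * Δ + LinearMap.trace ℝ Vb Tsh))
    (Rb : Vb → Vb → Vb → Vb → ℝ) (hRb : WPS.Curv Rb)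
    (Rf : Vf → Vf → Vf → Vf → ℝ) (hRf : WPS.Curv Rf)
    (Rbop : Vb → Vb → Vb → Vb) (hRbop : ∀ x y z w, gb (Rbop x y z) w = Rb x y z w)
    (Rfop : Vf → Vf → Vf → Vf) (hRfop : ∀ x y z w, gf (Rfop x y z) w = Rf x y z w)
    (Sb : Vb → Vb → ℝ)
    (hSb : ∀ y z, ∃ E : Vb →ₗ[ℝ] Vb, (∀ x w, gb (E x) w = Rb x y z w) ∧
      Sb y z = LinearMap.trace ℝ Vb E)
    (Sf : Vf → Vf → ℝ)
    (hSf : ∀ y z, ∃ E : Vf →ₗ[ℝ] Vf, (∀ x w, gf (E x) w = Rf x y z w) ∧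
      Sf y z = LinearMap.trace ℝ Vf E)
    (κf : ℝ)
    (hκf : ∃ E : Vf →ₗ[ℝ] Vf, (∀ x y, gf (E x) y = Sf x y) ∧
      κf = LinearMap.trace ℝ Vf E)
    (gV : Vb × Vf → Vb × Vf → ℝ)
    (hgV : ∀ X Y, gV X Y = gb X.1 Y.1 + f * gf X.2 Y.2)
    (RV : Vb × Vf → Vb × Vf → Vb × Vf → Vb × Vf → ℝ)
    (hRV : ∀ X Y Z W, RV X Y Z W = Rb X.1 Y.1 Z.1 W.1
      + f * (T X.1 Z.1 * gf Y.2 W.2 + T Y.1 W.1 * gf X.2 Z.2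
        - T X.1 W.1 * gf Y.2 Z.2 - T Y.1 Z.1 * gf X.2 W.2)
      + f * Rf X.2 Y.2 Z.2 W.2 - f ^ 2 * Δ * WPS.Gten gf X.2 Y.2 Z.2 W.2)
    (SV : Vb × Vf → Vb × Vf → ℝ)
    (hSV : ∀ X Y, SV X Y = (Sb X.1 Y.1 - (q : ℝ) * T X.1 Y.1)
      + (Sf X.2 Y.2 + Ω * gf X.2 Y.2))
    (Rop : Vb × Vf → Vb × Vf → Vb × Vf → Vb × Vf)
    (hRop : ∀ X Y Z W, gV (Rop X Y Z) W = RV X Y Z W)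
    (PV : Vb × Vf → Vb × Vf → Vb × Vf → Vb × Vf → ℝ)
    (hPV : ∀ X1 X2 X3 X4 : Vb × Vf, PV X1 X2 X3 X4 = RV X1 X2 X3 X4
      - 1 / (((p + q : ℕ) : ℝ) - 2) * (SV X2 X3 * gV X1 X4 - SV X1 X3 * gV X2 X4))
    (Pop : Vb × Vf → Vb × Vf → Vb × Vf → Vb × Vf)
    (hPop : ∀ X Y Z W, gV (Pop X Y Z) W = PV X Y Z W)
    (L1 : ℝ)
    (hmain : ∀ X1 X2 X3 X4 X Y : Vb × Vf, WPS.dot4 Pop RV X1 X2 X3 X4 X Y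
      = L1 * WPS.Q4 gV RV X1 X2 X3 X4 X Y) :
    (∀ x y z w : Vb, Rb x y z w = 0) ∨ (∀ a b : Vf, Sf a b = (κf / (q : ℝ)) * gf a b) :=
  stmt19_general p q hq hn hdf gb hgb hgbn gf hgf hgfn f Δ T hT Ω Rb hRb Rf hRf Rbop hRbop Sb hSb Sf
    κf hκf gV hgV RV hRV SV hSV PV hPV Pop hPop L1 hmain
end
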